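/- Let f_{ℓ,a,b}(x) = ∑_z ζ_z x^z be the polynomial whose coefficient ζ_z counts the number of length-ℓ words over alphabet Π with first character a, last character b, and free energy z. Then for any ℓ₁, ℓ₂ ≥ 1: f_{ℓ₁+ℓ₂,a,b}(x) = ∑_{d₁,d₂ ∈ Π} f_{ℓ₁,a,d₁}(x) · f_{ℓ₂,d₂,b}(x) · x^{Γ(d₁,d₂)}. -/

import Mathlib

/-- The free energy of a word, valued in `ℕ`. -/
def freeEnergy {α : Type*} (Γ : α → α → ℕ) (l : List α) : ℕ :=
  ((l.zip l.tail).map fun p => Γ p.1 p.2).sum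

/-- `f_{ℓ,a,b}(x)`: the polynomial whose coefficient of `x^z` is the number of
length-`ℓ` words with first character `a`, last character `b`, and free
energy `z`. -/
noncomputable def f {α : Type*} [Fintype α] [DecidableEq α] (Γ : α → α → ℕ)
    (ℓ : ℕ) (a b : α) : Polynomial ℕ :=
  ∑ v ∈ Finset.univ.filter (fun v : List.Vector α ℓ =>
      v.toList.head? = some a ∧ v.toList.getLast? = some b),
    Polynomial.X ^ freeEnergy Γ v.toList

/-!
Cutting a word of length `ℓ₁ + ℓ₂` after its `ℓ₁`-th letter is a bijection onto pairs of words
of lengths `ℓ₁` and `ℓ₂`. Across the cut the free energy is additive, up to the single bond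
`Γ d₁ d₂` between the last letter `d₁` of the first piece and the first letter `d₂` of the
second; summing over the possible letters at the cut gives the identity.
-/

open Polynomial

section Words

variable {α : Type*}

@[simp]
lemma freeEnergy_cons_cons (Γ : α → α → ℕ) (x y : α) (l : List α) :
    freeEnergy Γ (x :: y :: l) = Γ x y + freeEnergy Γ (y :: l) := by
  simp [freeEnergy]

lemma freeEnergy_append (Γ : α → α → ℕ) {l₁ l₂ : List α} {c d : α}
    (hc : l₁.getLast? = some c) (hd : l₂.head? = some d) :
    freeEnergy Γ (l₁ ++ l₂) = freeEnergy Γ l₁ + Γ c d + freeEnergy Γ l₂ := by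
  obtain ⟨l₂, rfl⟩ := List.head?_eq_some_iff.mp hd
  induction l₁ with
  | nil => simp at hc
  | cons x t ih =>
    cases t with
    | nil => simp_all [freeEnergy]
    | cons y t =>
      simp only [List.cons_append, freeEnergy_cons_cons] at ih ⊢
      rw [ih (by simpa using hc)]
      ring

namespace List.Vector

lemma toList_ne_nil {n : ℕ} (v : List.Vector α n) (hn : 0 < n) : v.toList ≠ [] :=
  List.ne_nil_of_length_pos (by rwa [toList_length])

def appendEquiv (m n : ℕ) : List.Vector α m × List.Vector α n ≃ List.Vector α (m + n) where
  toFun p := p.1 ++ p.2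
  invFun v := (⟨v.toList.take m, by simp⟩, ⟨v.toList.drop m, by simp⟩)
  left_inv p := by
    ext1 <;> apply List.Vector.eq <;> simp
  right_inv v := List.Vector.eq _ _ (by rw [toList_append]; simp [toList_mk])

end List.Vector

variable [DecidableEq α] (Γ : α → α → ℕ)

noncomputable def endpointMonomial (a b : α) (l : List α) : ℕ[X] :=
  if l.head? = some a ∧ l.getLast? = some b then X ^ freeEnergy Γ l else 0

lemma f_eq_sum_endpointMonomial [Fintype α] (ℓ : ℕ) (a b : α) :
    f Γ ℓ a b = ∑ v : List.Vector α ℓ, endpointMonomial Γ a b v.toList :=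
  Finset.sum_filter _ _

lemma sum_endpointMonomial_mul [Fintype α] (a b : α) {l₁ l₂ : List α}
    (h₁ : l₁ ≠ []) (h₂ : l₂ ≠ []) :
    ∑ d₁ : α, ∑ d₂ : α, endpointMonomial Γ a d₁ l₁ * endpointMonomial Γ d₂ b l₂ * X ^ Γ d₁ d₂ =
      endpointMonomial Γ a b (l₁ ++ l₂) := by
  obtain ⟨c, hc⟩ := Option.ne_none_iff_exists'.mp (List.getLast?_eq_none_iff.not.mpr h₁)
  obtain ⟨d, hd⟩ := Option.ne_none_iff_exists'.mp (List.head?_eq_none_iff.not.mpr h₂)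
  rw [Fintype.sum_eq_single c fun d₁ h => ?_, Fintype.sum_eq_single d fun d₂ h => ?_]
  · simp only [endpointMonomial, hc, hd, freeEnergy_append Γ hc hd,
      List.head?_append_of_ne_nil _ h₁, List.getLast?_append_of_ne_nil _ h₂]
    split_ifs <;> simp_all [pow_add, mul_right_comm]
  · simp [endpointMonomial, hd, Ne.symm h]
  · simp [endpointMonomial, hc, Ne.symm h]

end Words

/-- The convolution identity
`f_{ℓ₁+ℓ₂,a,b}(x) = ∑_{d₁,d₂} f_{ℓ₁,a,d₁}(x) · f_{ℓ₂,d₂,b}(x) · x^{Γ(d₁,d₂)}`. -/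
theorem stmt_16 {α : Type*} [Fintype α] [DecidableEq α] (Γ : α → α → ℕ)
    (ℓ₁ ℓ₂ : ℕ) (h₁ : 1 ≤ ℓ₁) (h₂ : 1 ≤ ℓ₂) (a b : α) :
    f Γ (ℓ₁ + ℓ₂) a b =
      ∑ d₁ : α, ∑ d₂ : α, f Γ ℓ₁ a d₁ * f Γ ℓ₂ d₂ b *
        Polynomial.X ^ Γ d₁ d₂ := by
  calc f Γ (ℓ₁ + ℓ₂) a b
      = ∑ u : List.Vector α ℓ₁, ∑ w : List.Vector α ℓ₂,
          endpointMonomial Γ a b (u.toList ++ w.toList) := by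
        rw [f_eq_sum_endpointMonomial, ← (List.Vector.appendEquiv ℓ₁ ℓ₂).sum_comp,
          Fintype.sum_prod_type]
        rfl
    _ = ∑ u : List.Vector α ℓ₁, ∑ w : List.Vector α ℓ₂, ∑ d₁ : α, ∑ d₂ : α,
          endpointMonomial Γ a d₁ u.toList * endpointMonomial Γ d₂ b w.toList * X ^ Γ d₁ d₂ := by
        simp only [sum_endpointMonomial_mul Γ a b (List.Vector.toList_ne_nil _ h₁)
          (List.Vector.toList_ne_nil _ h₂)]
    _ = _ := by
        simp only [f_eq_sum_endpointMonomial, Finset.sum_mul_sum]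
        simp only [Finset.sum_mul]
        simp_rw [Finset.sum_comm (γ := List.Vector α ℓ₂) (α := α),
          Finset.sum_comm (γ := List.Vector α ℓ₁) (α := α)]
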